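/- Let (G,H) be a Hecke pair with length function L (L vanishing on H). If (G,H) has property (RD′) with constants C, s (i.e., ‖λ(f)‖ ≤ C·(Σ_{g∈⟨G//H⟩}|f(g)|²(1+L(g))^{2s})^{1/2} for all f in the Hecke algebra), then for every g ∈ G the number of right cosets contained in HgH satisfies |HgH/~| ≤ C²(1+L(g))^{2s}, where ~ identifies elements of the same right coset Hx. -/

import Mathlib

/-!
Put `δ_g = 1_{HgH}` and let `N` be the number of right cosets in `HgH`. Applied to `1_H`, the
operator `λ(δ_g)` produces a function that is a positive integer on each of these `N` cosets, so
`√N ≤ ‖λ(δ_g)‖`. As `‖λ(δ_g)‖` is a supremum, this needs `λ(δ_g)` to be bounded, which holds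
with bound `N^{3/2}` by Cauchy–Schwarz, each translate in the convolution being at most
`N`-to-one. On the other side `‖δ_g‖'_{s,L} = (1 + L g)^s`, since `L` is constant on double cosets.
-/

open scoped BigOperators

/-- A length function on a group `G`. -/
def IsLengthFunction {G : Type*} [Group G] (L : G → ℝ) : Prop :=
  (∀ g, 0 ≤ L g) ∧ (∀ g h, L (g * h) ≤ L g + L h) ∧ (∀ g, L g⁻¹ = L g) ∧ L 1 = 0

/-- The `ℓ²`-norm of a function (junk value `0` if not square-summable). -/
noncomputable def l2f {α : Type*} (φ : α → ℂ) : ℝ :=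
  Real.sqrt (∑' x, ‖φ x‖ ^ 2)

/-- A complex-valued function is nonnegative real valued. -/
def NonnegFun {α : Type*} (f : α → ℂ) : Prop := ∀ x, ∃ t : ℝ, 0 ≤ t ∧ f x = t

variable {G : Type*} [Group G]

/-- The set `H\G` of right cosets `Hg`. -/
abbrev RC (H : Subgroup G) := Quotient (QuotientGroup.rightRel H)

/-- The right coset of `g`. -/
def mkRC (H : Subgroup G) (g : G) : RC H := Quotient.mk (QuotientGroup.rightRel H) g

/-- The set `G//H` of double cosets `HgH`. -/
abbrev DC (H : Subgroup G) := DoubleCoset.Quotient (H : Set G) (H : Set G)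

/-- The double coset of `g`. -/
def mkDC (H : Subgroup G) (g : G) : DC H := DoubleCoset.mk H H g

/-- A representative of a right coset. -/
noncomputable def repRC (H : Subgroup G) (x : RC H) : G := Quotient.out x

/-- The natural map sending a right coset to the double coset containing it. -/
noncomputable def toDC (H : Subgroup G) (x : RC H) : DC H := mkDC H (repRC H x)

/-- `H` is almost normal in `G`: every double coset `HgH` contains only finitely
many right cosets. -/
def AlmostNormal (H : Subgroup G) : Prop :=
  ∀ g : G, {x : RC H | ∃ h ∈ H, ∃ k ∈ H, x = mkRC H (h * g * k)}.Finite

/-- Convolution of a Hecke algebra element (a finitely supported function on `G//H`)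
with a function on `H\G`:  `(f * ξ)(Hg) = ∑_{γ ∈ ⟨H\G⟩} f(HγH) ξ(Hγ⁻¹g)`. -/
noncomputable def convH (H : Subgroup G) (f : DC H →₀ ℂ) (ξ : RC H → ℂ) : RC H → ℂ :=
  fun y => ∑' x : RC H, f (toDC H x) * ξ (mkRC H ((repRC H x)⁻¹ * repRC H y))

/-- The operator norm of the regular representation `λ(f)` on `ℓ²(H\G)`. -/
noncomputable def opNH (H : Subgroup G) (f : DC H →₀ ℂ) : ℝ :=
  sSup {c : ℝ | ∃ ξ : RC H →₀ ℂ, l2f ⇑ξ ≤ 1 ∧ c = l2f (convH H f ⇑ξ)}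

/-- The weighted `ℓ²`-norm `‖f‖_{s,L}` of a Hecke algebra element, summing over
right cosets `⟨H\G⟩`. -/
noncomputable def wnormH (H : Subgroup G) (L : G → ℝ) (s : ℝ) (f : DC H →₀ ℂ) : ℝ :=
  Real.sqrt (∑' x : RC H, ‖f (toDC H x)‖ ^ 2 * (1 + L (repRC H x)) ^ (2 * s))

/-- The `ℓ²(H\G)`-norm of a Hecke algebra element. -/
noncomputable def l2H (H : Subgroup G) (f : DC H →₀ ℂ) : ℝ :=
  l2f (fun x : RC H => f (toDC H x))

/-- The RD′-norm: the weighted `ℓ²`-norm summing over double cosets `⟨G//H⟩`. -/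
noncomputable def wnormH' {G : Type*} [Group G] (H : Subgroup G) (L : G → ℝ) (s : ℝ)
    (f : DC H →₀ ℂ) : ℝ :=
  Real.sqrt (∑ D ∈ f.support, ‖f D‖ ^ 2 * (1 + L (Quotient.out D)) ^ (2 * s))

section FiberCounting

variable {ι α β E : Type*} [SeminormedAddCommGroup E] [DecidableEq β]

theorem Finset.sum_norm_comp_sq_le (t : Finset α) (T : α → β) {M : ℕ}
    (hT : ∀ b, (t.filter fun a => T a = b).card ≤ M) {ξ : β → E}
    (hξ : Summable fun b => ‖ξ b‖ ^ 2) :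
    ∑ a ∈ t, ‖ξ (T a)‖ ^ 2 ≤ M * ∑' b, ‖ξ b‖ ^ 2 := by
  rw [Finset.sum_comp (fun b => ‖ξ b‖ ^ 2) T]
  calc ∑ b ∈ t.image T, (t.filter fun a => T a = b).card • ‖ξ b‖ ^ 2
      ≤ ∑ b ∈ t.image T, (M : ℝ) * ‖ξ b‖ ^ 2 := by
        gcongr with b
        rw [nsmul_eq_mul]
        gcongr
        exact_mod_cast hT b
    _ = M * ∑ b ∈ t.image T, ‖ξ b‖ ^ 2 := (Finset.mul_sum _ _ _).symm
    _ ≤ M * ∑' b, ‖ξ b‖ ^ 2 := by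
        gcongr
        exact hξ.sum_le_tsum _ fun b _ => by positivity

theorem Finset.sum_norm_sum_comp_sq_le (s : Finset ι) (t : Finset α) (T : ι → α → β) {M : ℕ}
    (hT : ∀ i ∈ s, ∀ b, (t.filter fun a => T i a = b).card ≤ M) {ξ : β → E}
    (hξ : Summable fun b => ‖ξ b‖ ^ 2) :
    ∑ a ∈ t, ‖∑ i ∈ s, ξ (T i a)‖ ^ 2 ≤ s.card ^ 2 * M * ∑' b, ‖ξ b‖ ^ 2 := by
  calc ∑ a ∈ t, ‖∑ i ∈ s, ξ (T i a)‖ ^ 2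
      ≤ ∑ a ∈ t, s.card * ∑ i ∈ s, ‖ξ (T i a)‖ ^ 2 := by
        gcongr with a
        exact (pow_le_pow_left₀ (norm_nonneg _) (norm_sum_le _ _) 2).trans
          sq_sum_le_card_mul_sum_sq
    _ = s.card * ∑ i ∈ s, ∑ a ∈ t, ‖ξ (T i a)‖ ^ 2 := by
        rw [← Finset.mul_sum, Finset.sum_comm]
    _ ≤ s.card * ∑ _i ∈ s, M * ∑' b, ‖ξ b‖ ^ 2 := by
        gcongr with i hi
        exact t.sum_norm_comp_sq_le (T i) (hT i hi) hξ
    _ = s.card ^ 2 * M * ∑' b, ‖ξ b‖ ^ 2 := by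
        rw [Finset.sum_const, nsmul_eq_mul]
        ring

end FiberCounting

theorem l2f_single_one {α : Type*} (a : α) : l2f ⇑(Finsupp.single a (1 : ℂ)) = 1 := by
  rw [l2f, tsum_eq_single a fun b hb => by simp [Finsupp.single_eq_of_ne hb]]
  simp

section HeckePair

variable {H : Subgroup G}

theorem mkRC_eq_mkRC_iff {a b : G} : mkRC H a = mkRC H b ↔ b * a⁻¹ ∈ H :=
  Quotient.eq.trans QuotientGroup.rightRel_apply

@[simp]
theorem mkRC_repRC (x : RC H) : mkRC H (repRC H x) = x :=
  Quotient.out_eq x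

theorem mkRC_mul_right_eq_mkRC_mul_right_iff {a b : G} (c : G) :
    mkRC H (a * c) = mkRC H (b * c) ↔ mkRC H a = mkRC H b := by
  simp only [mkRC_eq_mkRC_iff, mul_inv_rev, mul_assoc, mul_inv_cancel_left]

theorem mkDC_mul_of_mem {a k : G} (hk : k ∈ H) : mkDC H (a * k) = mkDC H a :=
  ((DoubleCoset.eq H H _ _).2 ⟨1, H.one_mem, k, hk, by group⟩).symm

def rightCosetsIn (H : Subgroup G) (g : G) : Set (RC H) :=
  {x : RC H | ∃ h ∈ H, ∃ k ∈ H, x = mkRC H (h * g * k)}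

theorem mkRC_mem_rightCosetsIn_iff {a g : G} :
    mkRC H a ∈ rightCosetsIn H g ↔ mkDC H a = mkDC H g := by
  rw [mkDC, mkDC, DoubleCoset.eq]
  constructor
  · rintro ⟨h, hh, k, hk, hx⟩
    obtain ⟨h', hh', rfl⟩ : ∃ h' ∈ H, a = h' * (h * g * k) :=
      ⟨a * (h * g * k)⁻¹, mkRC_eq_mkRC_iff.1 hx.symm, by group⟩
    exact ⟨(h' * h)⁻¹, H.inv_mem (H.mul_mem hh' hh), k⁻¹, H.inv_mem hk, by group⟩
  · rintro ⟨h, hh, k, hk, rfl⟩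
    exact ⟨h⁻¹, H.inv_mem hh, k⁻¹, H.inv_mem hk, by congr 1; group⟩

theorem mem_rightCosetsIn_iff {x : RC H} {g : G} :
    x ∈ rightCosetsIn H g ↔ toDC H x = mkDC H g := by
  conv_lhs => rw [← mkRC_repRC x]
  exact mkRC_mem_rightCosetsIn_iff

/-- `y ↦ H y b⁻¹` embeds the fibre `{y | H x⁻¹ y = H b}` into the right cosets of `HgH`. -/
theorem card_filter_mkRC_inv_mul_le [DecidableEq (RC H)] {g : G}
    (hF : (rightCosetsIn H g).Finite) {x : RC H} (hx : x ∈ rightCosetsIn H g)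
    (t : Finset (RC H)) (b : RC H) :
    (t.filter fun y => mkRC H ((repRC H x)⁻¹ * repRC H y) = b).card ≤ hF.toFinset.card := by
  refine Finset.card_le_card_of_injOn (fun y => mkRC H (repRC H y * (repRC H b)⁻¹)) ?_ ?_
  · intro y hy
    rw [Finset.mem_coe, Finset.mem_filter] at hy
    have hk := mkRC_eq_mkRC_iff.1 (hy.2.trans (mkRC_repRC b).symm)
    rw [Finset.mem_coe, hF.mem_toFinset, mkRC_mem_rightCosetsIn_iff,
      ← (mem_rightCosetsIn_iff.1 hx), toDC, ← mkDC_mul_of_mem (a := repRC H x) (H.inv_mem hk)]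
    congr 1
    group
  · intro y _ y' _ hyy'
    simpa using (mkRC_mul_right_eq_mkRC_mul_right_iff _).1 hyy'

theorem convH_single_apply {g : G} (hF : (rightCosetsIn H g).Finite) (ξ : RC H → ℂ)
    (y : RC H) :
    convH H (Finsupp.single (mkDC H g) 1) ξ y =
      ∑ x ∈ hF.toFinset, ξ (mkRC H ((repRC H x)⁻¹ * repRC H y)) := by
  rw [convH, tsum_eq_sum (s := hF.toFinset)]
  · refine Finset.sum_congr rfl fun x hx => ?_
    rw [mem_rightCosetsIn_iff.1 (hF.mem_toFinset.1 hx), Finsupp.single_eq_same, one_mul]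
  · intro x hx
    rw [hF.mem_toFinset, mem_rightCosetsIn_iff] at hx
    rw [Finsupp.single_eq_of_ne hx, zero_mul]

theorem tsum_norm_convH_single_sq_le {g : G} (hF : (rightCosetsIn H g).Finite) {ξ : RC H → ℂ}
    (hξ : Summable fun b => ‖ξ b‖ ^ 2) :
    ∑' y, ‖convH H (Finsupp.single (mkDC H g) 1) ξ y‖ ^ 2 ≤
      (rightCosetsIn H g).ncard ^ 3 * ∑' b, ‖ξ b‖ ^ 2 := by
  classical
  refine Real.tsum_le_of_sum_le (fun y => by positivity) fun t => ?_
  simp only [convH_single_apply hF]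
  calc _ ≤ hF.toFinset.card ^ 2 * hF.toFinset.card * ∑' b, ‖ξ b‖ ^ 2 :=
        hF.toFinset.sum_norm_sum_comp_sq_le t _
          (fun x hx => card_filter_mkRC_inv_mul_le hF (hF.mem_toFinset.1 hx) t) hξ
    _ = _ := by rw [← Set.ncard_eq_toFinset_card _ hF]; ring

theorem l2f_convH_le_opNH_single {g : G} (hF : (rightCosetsIn H g).Finite) (ξ : RC H →₀ ℂ)
    (hξ : l2f ξ ≤ 1) :
    l2f (convH H (Finsupp.single (mkDC H g) 1) ξ) ≤ opNH H (Finsupp.single (mkDC H g) 1) := by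
  refine le_csSup ⟨√((rightCosetsIn H g).ncard ^ 3), ?_⟩ ⟨ξ, hξ, rfl⟩
  rintro _ ⟨η, hη, rfl⟩
  have hη' : ∑' b, ‖η b‖ ^ 2 ≤ 1 := by
    rwa [l2f, Real.sqrt_le_one] at hη
  refine Real.sqrt_le_sqrt ((tsum_norm_convH_single_sq_le hF ?_).trans ?_)
  · exact summable_of_ne_finset_zero (s := η.support) fun b hb => by
      simp [Finsupp.notMem_support_iff.1 hb]
  · exact mul_le_of_le_one_right (by positivity) hη'

open scoped Classical in
theorem convH_single_single_one_apply {g : G} (hF : (rightCosetsIn H g).Finite) (y : RC H) :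
    convH H (Finsupp.single (mkDC H g) 1) (Finsupp.single (mkRC H 1) 1) y =
      (hF.toFinset.filter fun x => (repRC H x)⁻¹ * repRC H y ∈ H).card := by
  rw [convH_single_apply hF, Finset.card_filter, Nat.cast_sum]
  refine Finset.sum_congr rfl fun x _ => ?_
  simp only [Finsupp.single_apply, mkRC_eq_mkRC_iff, inv_one, mul_one]
  split_ifs <;> simp

theorem sqrt_ncard_le_l2f_convH_single_single {g : G} (hF : (rightCosetsIn H g).Finite) :
    √(rightCosetsIn H g).ncard ≤
      l2f (convH H (Finsupp.single (mkDC H g) 1) (Finsupp.single (mkRC H 1) 1)) := by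
  classical
  set Fs := hF.toFinset
  have hcount := convH_single_single_one_apply hF
  have hzero : ∀ y ∉ Fs, (Fs.filter fun x => (repRC H x)⁻¹ * repRC H y ∈ H) = ∅ := by
    intro y hy
    refine Finset.filter_eq_empty_iff.2 fun x hx hxy => hy ?_
    rw [hF.mem_toFinset, mem_rightCosetsIn_iff] at hx ⊢
    rw [← hx, toDC, toDC, ← mkDC_mul_of_mem (a := repRC H x) hxy, mul_inv_cancel_left]
  have hself : ∀ y ∈ Fs, y ∈ Fs.filter fun x => (repRC H x)⁻¹ * repRC H y ∈ H := fun y hy =>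
    Finset.mem_filter.2 ⟨hy, by simp [H.one_mem]⟩
  rw [l2f, Set.ncard_eq_toFinset_card _ hF]
  refine Real.sqrt_le_sqrt ?_
  rw [tsum_eq_sum (s := Fs) fun y hy => by rw [hcount, hzero y hy]; simp]
  calc ((Fs.card : ℕ) : ℝ) = ∑ _y ∈ Fs, (1 : ℝ) := by simp
    _ ≤ _ := Finset.sum_le_sum fun y hy => by
      rw [hcount, Complex.norm_natCast]
      exact_mod_cast Nat.one_le_pow _ _ (Finset.card_pos.2 ⟨y, hself y hy⟩)

theorem apply_eq_of_mkDC_eq {L : G → ℝ} (hmul : ∀ a b, L (a * b) ≤ L a + L b)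
    (hLH : ∀ h ∈ H, L h = 0) {a b : G} (hab : mkDC H a = mkDC H b) : L a = L b := by
  have key : ∀ a b, mkDC H a = mkDC H b → L b ≤ L a := by
    intro a b hab
    obtain ⟨h, hh, k, hk, rfl⟩ := (DoubleCoset.eq H H a b).1 hab
    linarith [hmul (h * a) k, hmul h a, hLH h hh, hLH k hk]
  exact le_antisymm (key b a hab.symm) (key a b hab)

theorem wnormH'_single {L : G → ℝ} (hmul : ∀ a b, L (a * b) ≤ L a + L b)
    (hLH : ∀ h ∈ H, L h = 0) (s : ℝ) (g : G) :
    wnormH' H L s (Finsupp.single (mkDC H g) 1) = √((1 + L g) ^ (2 * s)) := by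
  rw [wnormH', Finsupp.support_single _ one_ne_zero, Finset.sum_singleton,
    Finsupp.single_eq_same, norm_one, one_pow, one_mul,
    apply_eq_of_mkDC_eq hmul hLH (DoubleCoset.out_eq' H H (mkDC H g))]

end HeckePair

theorem stmt7_general {G : Type*} [Group G] (H : Subgroup G) (hAN : AlmostNormal H)
    (L : G → ℝ) (hL : IsLengthFunction L) (hLH : ∀ h ∈ H, L h = 0)
    (C s : ℝ)
    (hRD' : ∀ f : DC H →₀ ℂ, opNH H f ≤ C * wnormH' H L s f) :
    ∀ g : G,
      ({x : RC H | ∃ h ∈ H, ∃ k ∈ H, x = mkRC H (h * g * k)}.ncard : ℝ) ≤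
        C ^ 2 * (1 + L g) ^ (2 * s) := by
  intro g
  have hF : (rightCosetsIn H g).Finite := hAN g
  have key : √(rightCosetsIn H g).ncard ≤ C * √((1 + L g) ^ (2 * s)) :=
    calc √(rightCosetsIn H g).ncard
        ≤ l2f (convH H (Finsupp.single (mkDC H g) 1) (Finsupp.single (mkRC H 1) 1)) :=
          sqrt_ncard_le_l2f_convH_single_single hF
      _ ≤ opNH H (Finsupp.single (mkDC H g) 1) :=
          l2f_convH_le_opNH_single hF _ (l2f_single_one _).le
      _ ≤ C * √((1 + L g) ^ (2 * s)) := by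
          simpa only [wnormH'_single hL.2.1 hLH] using hRD' (Finsupp.single (mkDC H g) 1)
  have h1L : 0 ≤ 1 + L g := by linarith [hL.1 g]
  have hsq := pow_le_pow_left₀ (Real.sqrt_nonneg _) key 2
  rwa [Real.sq_sqrt (Nat.cast_nonneg _), mul_pow, Real.sq_sqrt (Real.rpow_nonneg h1L _)] at hsq

/-- property (RD′) with constants `C, s` implies that the number of
right cosets contained in `HgH` is at most `C² (1 + L g)^{2s}`. -/
theorem stmt7 {G : Type*} [Group G] (H : Subgroup G) (hAN : AlmostNormal H)
    (L : G → ℝ) (hL : IsLengthFunction L) (hLH : ∀ h ∈ H, L h = 0)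
    (C s : ℝ) (hC : 0 < C) (hs : 0 < s)
    (hRD' : ∀ f : DC H →₀ ℂ, opNH H f ≤ C * wnormH' H L s f) :
    ∀ g : G,
      ({x : RC H | ∃ h ∈ H, ∃ k ∈ H, x = mkRC H (h * g * k)}.ncard : ℝ) ≤
        C ^ 2 * (1 + L g) ^ (2 * s) :=
  stmt7_general H hAN L hL hLH C s hRD'
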